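/- The following inequality holds: I(√(4π·3.474 − 3.474²), 5, −1.301, 1) > 0, i.e., circPerim0(3.474) + 1.301·B' − p₅ > 0. -/

import Mathlib

open Real

/-- Perimeter of a regular spherical `n`-gon of area `x` on the unit sphere. -/
noncomputable def regPerim (x n : ℝ) : ℝ :=
  n * Real.arccos ((Real.cos (2 * π / n) +
      (Real.cos ((π - (2 * π - x) / n) / 2)) ^ 2) /
      (Real.sin ((π - (2 * π - x) / n) / 2)) ^ 2)

/-- Circumference of a circle on the unit sphere enclosing area `a`. -/
noncomputable def circPerim0 (a : ℝ) : ℝ := Real.sqrt (4 * π * a - a ^ 2)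

/-- Perimeter of the regular spherical pentagon of area `π/3`. -/
noncomputable def p5 : ℝ := 5 * Real.arccos ((4 * Real.cos (2 * π / 5) + 1) / 3)

/-- Derivative at `n = 5` of `n ↦ regPerim (π/3) n`. -/
noncomputable def p5' : ℝ := deriv (fun n : ℝ => regPerim (π / 3) n) 5

/-- `B' = -∂₁ regPerim (π/3, 5)`. -/
noncomputable def B' : ℝ := - deriv (fun x : ℝ => regPerim x 5) (π / 3)

/-- The isoperimetric functional `I(ℓ, n, t, ρ)`. -/
noncomputable def Ifun (ℓ n t ρ : ℝ) : ℝ := ℓ - t * B' + (5 - n) * p5' - ρ * p5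

/-!
The inequality reduces to explicit numbers. From `cos (2π/5) = (√5 - 1)/4`, the regular pentagon
of area `π/3` has half angle `π/3` and side cosine `√5/3`, so `p₅ = 5 arccos (√5/3)`, and
differentiating `n · arccos (side cosine)` in the area gives `B' = -√3 (√5 + 3)/6`. What remains,
`√(4π·3.474 - 3.474²) - 1.301 · √3 (√5 + 3)/6 - 5 arccos (√5/3) > 0`, has a margin of about `0.005`;
it follows from `π > 3.141592`, `arccos (√5/3) < 0.73` (via `sin y ≥ y - y³/6` at `y = 0.365`) and
decimal bounds on `√3` and `√5`.
-/

/-- The half angle `α / 2`: a spherical `n`-gon of area `x` has angle sum `(n - 2)π + x`. -/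
noncomputable def regHalfAngle (x n : ℝ) : ℝ := (π - (2 * π - x) / n) / 2

/-- The cosine of the side length, by the spherical law of cosines (for angles) in the triangle
formed by the centre and one side. -/
noncomputable def regSideCos (x n : ℝ) : ℝ :=
  (cos (2 * π / n) + cos (regHalfAngle x n) ^ 2) / sin (regHalfAngle x n) ^ 2

lemma hasDerivAt_regHalfAngle (x n : ℝ) :
    HasDerivAt (fun x => regHalfAngle x n) (1 / (2 * n)) x := by
  refine ((((hasDerivAt_id x).const_sub (2 * π)).div_const n).const_sub π |>.div_const 2)
    |>.congr_deriv ?_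
  ring

lemma hasDerivAt_regSideCos {x n : ℝ} (hn : n ≠ 0) (hs : sin (regHalfAngle x n) ≠ 0) :
    HasDerivAt (fun x => regSideCos x n)
      (-(cos (2 * π / n) + 1) * cos (regHalfAngle x n) / (n * sin (regHalfAngle x n) ^ 3)) x := by
  have hθ := hasDerivAt_regHalfAngle x n
  refine ((hθ.cos.pow 2).const_add (cos (2 * π / n))).div (hθ.sin.pow 2) (pow_ne_zero 2 hs)
    |>.congr_deriv ?_
  simp only [Pi.pow_apply, Nat.cast_ofNat, Nat.add_one_sub_one, pow_one]
  field_simp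
  linear_combination -cos (regHalfAngle x n) * sin_sq_add_cos_sq (regHalfAngle x n)

lemma hasDerivAt_regPerim_area {x n : ℝ} (hn : n ≠ 0) (hs : sin (regHalfAngle x n) ≠ 0)
    (h₁ : regSideCos x n ≠ -1) (h₂ : regSideCos x n ≠ 1) :
    HasDerivAt (fun x => regPerim x n)
      ((cos (2 * π / n) + 1) * cos (regHalfAngle x n) /
        (sin (regHalfAngle x n) ^ 3 * √(1 - regSideCos x n ^ 2))) x := by
  refine ((hasDerivAt_arccos h₁ h₂).comp x (hasDerivAt_regSideCos hn hs)).const_mul n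
    |>.congr_deriv ?_
  field_simp

lemma cos_two_pi_div_five : cos (2 * π / 5) = (√5 - 1) / 4 := by
  rw [show 2 * π / 5 = 2 * (π / 5) by ring, cos_two_mul, cos_pi_div_five]
  linear_combination Real.sq_sqrt (show (0 : ℝ) ≤ 5 by norm_num) / 8

lemma regHalfAngle_pentagon : regHalfAngle (π / 3) 5 = π / 3 := by
  unfold regHalfAngle; ring

lemma regSideCos_pentagon : regSideCos (π / 3) 5 = √5 / 3 := by
  have h3 : (√3 / 2) ^ 2 = 3 / 4 := by rw [div_pow, Real.sq_sqrt (by norm_num)]; norm_num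
  rw [regSideCos, regHalfAngle_pentagon, cos_two_pi_div_five, cos_pi_div_three,
    sin_pi_div_three, h3]
  ring

lemma p5_eq : p5 = 5 * arccos (√5 / 3) := by
  rw [p5, cos_two_pi_div_five]
  ring_nf

lemma B'_eq : B' = -(√3 * (√5 + 3) / 6) := by
  have h5 : √5 ^ 2 = 5 := Real.sq_sqrt (by norm_num)
  have h3 : √3 ^ 2 = 3 := Real.sq_sqrt (by norm_num)
  have hs : sin (regHalfAngle (π / 3) 5) ≠ 0 := by
    rw [regHalfAngle_pentagon, sin_pi_div_three]; positivity
  have hg : regSideCos (π / 3) 5 < 1 := by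
    rw [regSideCos_pentagon, div_lt_one (by norm_num), Real.sqrt_lt' (by norm_num)]; norm_num
  have hg' : -1 < regSideCos (π / 3) 5 := by
    rw [regSideCos_pentagon]; linarith [Real.sqrt_nonneg 5]
  have hroot : √(1 - (√5 / 3) ^ 2) = 2 / 3 := by
    rw [Real.sqrt_eq_iff_mul_self_eq_of_pos (by norm_num), div_pow, h5]; norm_num
  rw [B', (hasDerivAt_regPerim_area (by norm_num) hs hg'.ne' hg.ne).deriv, regSideCos_pentagon,
    regHalfAngle_pentagon, cos_two_pi_div_five, cos_pi_div_three, sin_pi_div_three, hroot]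
  field_simp
  rw [show √3 ^ 4 = (√3 ^ 2) ^ 2 by ring, h3]
  ring

/-- Taylor's bound `x - x³/6 ≤ sin x` at `x/2`, pushed through `cos x = 1 - 2 sin² (x/2)`. -/
lemma cos_le_one_sub_two_mul_sq {x : ℝ} (hx₀ : 0 ≤ x) (hx : x ≤ 4) :
    cos x ≤ 1 - 2 * (x / 2 - (x / 2) ^ 3 / 6) ^ 2 := by
  have hsin := sin_ge_sub_cube (x := x / 2) (by positivity)
  have hpos : 0 ≤ x / 2 - (x / 2) ^ 3 / 6 := by
    nlinarith [mul_nonneg (mul_nonneg hx₀ hx₀) (sub_nonneg.2 hx)]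
  rw [show x = 2 * (x / 2) by ring, cos_two_mul_eq_one_sub, ← show x = 2 * (x / 2) by ring]
  nlinarith

lemma arccos_sqrt_five_div_three_lt : arccos (√5 / 3) < 0.73 := by
  have hcos : cos 0.73 < √5 / 3 := by
    refine (cos_le_one_sub_two_mul_sq (by norm_num) (by norm_num)).trans_lt ?_
    rw [lt_div_iff₀ (by norm_num), Real.lt_sqrt (by norm_num)]
    norm_num
  have hle : √5 / 3 ≤ 1 := by
    rw [div_le_one (by norm_num), Real.sqrt_le_left (by norm_num)]; norm_num
  calc arccos (√5 / 3) < arccos (cos 0.73) :=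
        arccos_lt_arccos (by linarith [neg_one_le_cos (0.73 : ℝ)]) hcos hle
    _ = 0.73 := arccos_cos (by norm_num) (by linarith [pi_gt_three])

lemma lt_circPerim0 : (5.6202 : ℝ) < circPerim0 3.474 := by
  rw [circPerim0, Real.lt_sqrt (by norm_num)]
  nlinarith [pi_gt_d6]

theorem case_area_large :
    Ifun (circPerim0 3.474) 5 (-1.301) 1 > 0 := by
  have h3 : √3 < 1.73206 := by rw [Real.sqrt_lt' (by norm_num)]; norm_num
  have h5 : √5 < 2.23607 := by rw [Real.sqrt_lt' (by norm_num)]; norm_num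
  have hB : √3 * (√5 + 3) < 9.0696 := by
    nlinarith [Real.sqrt_nonneg 3, Real.sqrt_nonneg 5]
  rw [Ifun, B'_eq, p5_eq]
  linarith [lt_circPerim0, arccos_sqrt_five_div_three_lt]
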